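/- arXiv:2505.20927 — 2 statements merged into one kernel-verified Lean document; each statement's English description precedes it below -/
import Mathlib

section
/- Under the uniform concentration event that max over subsets J ⊆ {1,...,K} of |Σ_{j∈J}(p̂_j - P(D^(j)))| ≤ δ, any point x satisfying the robustified empirical chance constraint Σ_{j=1}^K p̂_j · 1[∃h: g_h(x,θ) ≤ 0 ∀θ∈D^(j)] ≥ 1 - (ε - δ) also satisfies the true chance constraint P(g(x,θ) ≤ 0) ≥ 1 - ε, where g = min_h g_h. -/
open MeasureTheory
open scoped Classical

/-- Feasibility direction of Theorem 1: under the uniform concentration event,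
the robustified empirical chance constraint implies the true chance constraint. -/
theorem stmt3 {X Θ : Type*} [MeasurableSpace Θ] (P : Measure Θ) [IsProbabilityMeasure P]
    (Z K : ℕ) [NeZero Z] (g : Fin Z → X → Θ → ℝ)
    (D : Fin K → Set Θ) (hmeas : ∀ j, MeasurableSet (D j))
    (hdisj : ∀ i j, i ≠ j → P (D i ∩ D j) = 0)
    (hcover : P (⋃ j, D j) = 1)
    (phat : Fin K → ℝ) (hphat : ∀ j, 0 ≤ phat j) (hsum : ∑ j, phat j = 1)
    (ε δ : ℝ) (hε0 : 0 < ε) (hε1 : ε < 1) (hδ0 : 0 < δ) (hδε : δ ≤ ε)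
    (hconc : ∀ J : Finset (Fin K),
      |∑ j ∈ J, (phat j - (P (D j)).toReal)| ≤ δ)
    (x : X)
    (hfeas : 1 - (ε - δ) ≤
      ∑ j : Fin K, phat j * (if ∃ h, ∀ θ ∈ D j, g h x θ ≤ 0 then 1 else 0)) :
    1 - ε ≤ (P {θ | (⨅ h, g h x θ) ≤ 0}).toReal := by
  set J : Finset (Fin K) := Finset.univ.filter (fun j => ∃ h, ∀ θ ∈ D j, g h x θ ≤ 0) with hJ
  have hsumJ : 1 - (ε - δ) ≤ ∑ j ∈ J, phat j := by
    calc 1 - (ε - δ)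
        ≤ ∑ j : Fin K, phat j * (if ∃ h, ∀ θ ∈ D j, g h x θ ≤ 0 then 1 else 0) := hfeas
      _ = ∑ j ∈ J, phat j := by
          rw [hJ, Finset.sum_filter]
          exact Finset.sum_congr rfl (fun j _ => by
            by_cases hj : ∃ h, ∀ θ ∈ D j, g h x θ ≤ 0 <;> simp [hj])
  have hconcJ := abs_le.mp (hconc J)
  have hdist : ∑ j ∈ J, (phat j - (P (D j)).toReal)
      = ∑ j ∈ J, phat j - ∑ j ∈ J, (P (D j)).toReal := Finset.sum_sub_distrib _ _
  have h1 : 1 - ε ≤ ∑ j ∈ J, (P (D j)).toReal := by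
    have := hconcJ.2
    rw [hdist] at this
    linarith
  have hune : P (⋃ j ∈ J, D j) = ∑ j ∈ J, P (D j) := by
    apply measure_biUnion_finset₀
    · intro i _ j _ hij
      exact hdisj i j hij
    · intro i _
      exact (hmeas i).nullMeasurableSet
  have h3 : (∑ j ∈ J, P (D j)).toReal = ∑ j ∈ J, (P (D j)).toReal :=
    ENNReal.toReal_sum (fun j _ => measure_ne_top P _)
  have hsub : (⋃ j ∈ J, D j) ⊆ {θ | (⨅ h, g h x θ) ≤ 0} := by
    intro θ hθ
    simp only [Set.mem_iUnion] at hθ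
    obtain ⟨j, hjJ, hθj⟩ := hθ
    have hj : ∃ h, ∀ θ ∈ D j, g h x θ ≤ 0 := by
      have := Finset.mem_filter.mp (hJ ▸ hjJ)
      exact this.2
    obtain ⟨h, hh⟩ := hj
    calc (⨅ h', g h' x θ) ≤ g h x θ := ciInf_le (Set.Finite.bddBelow (Set.finite_range _)) h
      _ ≤ 0 := hh θ hθj
  have hmono := ENNReal.toReal_mono (measure_ne_top P _) (measure_mono hsub)
  rw [hune, h3] at hmono
  linarith
end

section
/- Under the uniform concentration event max_{J⊆{1,...,K}} |Σ_{j∈J}(P(D^(j)) - p̂_j)| ≤ δ, and with relaxation functions γ_h^(j) as above, every x satisfying the true chance constraint P(g(x,θ) ≤ 0) ≥ 1 - ε (with g = min_h g_h) also satisfies the relaxed empirical constraint Σ_{j=1}^K p̂_j · 1[∃h: g_h(x,θ̂^(j)) ≤ γ_h^(j)(x,θ̂^(j))] ≥ 1 - ε - δ. -/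
open MeasureTheory
open scoped Classical

/-- Second inclusion of Lemma 2: under the concentration event, any point
satisfying the true chance constraint satisfies the relaxed empirical one. -/
theorem stmt5 {X Θ : Type*} [MeasurableSpace Θ] (P : Measure Θ) [IsProbabilityMeasure P]
    (Z K : ℕ) [NeZero Z] (g : Fin Z → X → Θ → ℝ)
    (D : Fin K → Set Θ) (hmeas : ∀ j, MeasurableSet (D j))
    (hdisj : ∀ i j, i ≠ j → P (D i ∩ D j) = 0)
    (hcover : P (⋃ j, D j) = 1)
    (θhat : Fin K → Θ) (hθhat : ∀ j, θhat j ∈ D j)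
    (γ : Fin Z → Fin K → X → Θ → ℝ) (hγ : ∀ h j x θ, 0 ≤ γ h j x θ)
    (hrelax : ∀ h j x, ∀ θ ∈ D j, g h x (θhat j) - g h x θ ≤ γ h j x (θhat j))
    (phat : Fin K → ℝ) (hphat : ∀ j, 0 ≤ phat j) (hsum : ∑ j, phat j = 1)
    (ε δ : ℝ) (hε0 : 0 < ε) (hε1 : ε < 1) (hδ0 : 0 < δ) (hδε : δ ≤ ε)
    (hconc : ∀ J : Finset (Fin K),
      |∑ j ∈ J, ((P (D j)).toReal - phat j)| ≤ δ)
    (x : X)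
    (htrue : 1 - ε ≤ (P {θ | (⨅ h, g h x θ) ≤ 0}).toReal) :
    1 - ε - δ ≤
      ∑ j : Fin K, phat j *
        (if ∃ h, g h x (θhat j) ≤ γ h j x (θhat j) then 1 else 0) := by
  set Jset : Finset (Fin K) :=
    Finset.univ.filter (fun j => ∃ h, g h x (θhat j) ≤ γ h j x (θhat j)) with hJ
  have hRHS : ∑ j : Fin K, phat j *
      (if ∃ h, g h x (θhat j) ≤ γ h j x (θhat j) then 1 else 0)
      = ∑ j ∈ Jset, phat j := by
    rw [hJ, Finset.sum_filter]
    refine Finset.sum_congr rfl fun j _ => ?_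
    by_cases hc : ∃ h, g h x (θhat j) ≤ γ h j x (θhat j) <;> simp [hc]
  rw [hRHS]
  set A : Set Θ := {θ | (⨅ h, g h x θ) ≤ 0} with hA
  set U : Set Θ := ⋃ j, D j with hU
  have hUm : MeasurableSet U := MeasurableSet.iUnion hmeas
  have hsub : A ∩ U ⊆ ⋃ j ∈ Jset, D j := by
    rintro θ ⟨hθA, hθU⟩
    obtain ⟨j, hjD⟩ : ∃ j, θ ∈ D j := Set.mem_iUnion.mp hθU
    obtain ⟨h, hheq⟩ := exists_eq_ciInf_of_finite (f := fun h => g h x θ)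
    have hg0 : g h x θ ≤ 0 := hheq ▸ hθA
    have : g h x (θhat j) ≤ γ h j x (θhat j) := by
      have := hrelax h j x θ hjD
      linarith
    exact Set.mem_biUnion (Finset.mem_filter.mpr ⟨Finset.mem_univ j, ⟨h, this⟩⟩) hjD
  have hcompl : P Uᶜ = 0 := by
    rw [measure_compl hUm (by simp), hcover]
    simp
  have hPA : P A ≤ ∑ j ∈ Jset, P (D j) := by
    calc P A ≤ P (A ∩ U) + P Uᶜ := by
          refine le_trans (measure_mono ?_) (measure_union_le _ _)
          intro θ hθ
          by_cases hu : θ ∈ U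
          · exact Or.inl ⟨hθ, hu⟩
          · exact Or.inr hu
      _ = P (A ∩ U) := by rw [hcompl, add_zero]
      _ ≤ P (⋃ j ∈ Jset, D j) := measure_mono hsub
      _ ≤ ∑ j ∈ Jset, P (D j) := measure_biUnion_finset_le _ _
  have hfin : ∀ j ∈ Jset, P (D j) ≠ ⊤ := fun j _ => measure_ne_top P _
  have hPAr : (P A).toReal ≤ ∑ j ∈ Jset, (P (D j)).toReal := by
    rw [← ENNReal.toReal_sum hfin]
    exact ENNReal.toReal_mono (ENNReal.sum_ne_top.mpr hfin) hPA
  have hcJ := hconc Jset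
  rw [Finset.sum_sub_distrib, abs_le] at hcJ
  linarith [hcJ.2]
end
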